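/- arXiv:2512.10171 — 4 statements merged into one kernel-verified Lean document; each statement's English description precedes it below -/
import Mathlib

section
/- Let L(x) := exp((log log x) · sin(log log x)) for x > e, and let p : ℕ → (0,1) be a sequence. Define G_n := n · p_n · log(1/p_n) for n ∈ ℕ, and a_n := n · p_n / L(n²). Suppose there exist constants 0 < A₋ ≤ A₊ < ∞ such that A₋ ≤ liminf_{n→∞} a_n and limsup_{n→∞} a_n ≤ A₊. Then A₋/2 ≤ liminf_{n→∞} G_n. -/
/-!
Since `|sin| ≤ 1`, `L(x)` lies between `(log x)⁻¹` and `log x`; with `log (n²) = 2 log n` the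
liminf bound gives `n p_n ≥ m / log n` for every `m < A₋/2`, and the limsup bound gives
`n p_n ≤ K log n`, i.e. `log (1/p_n) ≥ log n - log (K log n)`. Hence
`G_n ≥ m (1 - log (K log n) / log n) → m`.
-/

open Filter Real Topology

/-- The paper's `L`. -/
noncomputable def loglogSin (x : ℝ) : ℝ := exp (log (log x) * sin (log (log x)))

section
variable {x : ℝ}

lemma inv_log_le_loglogSin (hx : 1 ≤ log x) : (log x)⁻¹ ≤ loglogSin x := by
  have hlog : 0 ≤ log (log x) := log_nonneg hx
  rw [loglogSin, ← exp_log (inv_pos.2 (by linarith) : 0 < (log x)⁻¹), log_inv, exp_le_exp]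
  nlinarith [neg_one_le_sin (log (log x))]

lemma loglogSin_le_log (hx : 1 ≤ log x) : loglogSin x ≤ log x := by
  have hlog : 0 ≤ log (log x) := log_nonneg hx
  rw [loglogSin]
  conv_rhs => rw [← exp_log (by linarith : 0 < log x)]
  rw [exp_le_exp]
  nlinarith [sin_le_one (log (log x))]

end

lemma tendsto_log_const_mul_div_atTop {K : ℝ} (hK : K ≠ 0) :
    Tendsto (fun t => log (K * t) / t) atTop (𝓝 0) := by
  have h := (tendsto_const_nhds (x := log K)).div_atTop tendsto_id |>.add
    isLittleO_log_id_atTop.tendsto_div_nhds_zero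
  rw [zero_add] at h
  refine h.congr' ?_
  filter_upwards [eventually_gt_atTop 0] with t ht
  rw [log_mul hK ht.ne', add_div, id]

lemma tendsto_div_mul_sub_log_const_mul {K : ℝ} (hK : K ≠ 0) (m : ℝ) :
    Tendsto (fun t => m / t * (t - log (K * t))) atTop (𝓝 m) := by
  have h := (tendsto_log_const_mul_div_atTop hK).const_mul m |>.const_sub m
  rw [mul_zero, sub_zero] at h
  refine h.congr' ?_
  filter_upwards [eventually_gt_atTop 0] with t ht
  field_simp

lemma mul_sub_log_le_mul_log_div {x u a b : ℝ} (hx : x ≠ 0) (hu : 0 < u) (ha : a ≤ u)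
    (hb : u ≤ b) (hbx : log b ≤ log x) : a * (log x - log b) ≤ u * log (x / u) := by
  have hlog : log x - log b ≤ log (x / u) := by
    rw [log_div hx hu.ne']
    linarith [log_le_log hu hb]
  exact mul_le_mul ha hlog (by linarith) hu.le

lemma eventually_lt_mul_log_div {u : ℕ → ℝ} {m K c : ℝ} (hK : K ≠ 0) (hc : c < m)
    (hu : ∀ᶠ n in atTop, 0 < u n) (hlo : ∀ᶠ n : ℕ in atTop, m / log n ≤ u n)
    (hhi : ∀ᶠ n : ℕ in atTop, u n ≤ K * log n) :
    ∀ᶠ n : ℕ in atTop, c < u n * log ((n : ℝ) / u n) := by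
  have hlog : Tendsto (fun n : ℕ => log n) atTop atTop :=
    tendsto_log_atTop.comp tendsto_natCast_atTop_atTop
  have hlim := (tendsto_div_mul_sub_log_const_mul hK m).comp hlog
  have hsmall := (tendsto_log_const_mul_div_atTop hK).comp hlog
  filter_upwards [hu, hlo, hhi, hlim.eventually (eventually_gt_nhds hc),
    hsmall.eventually (eventually_lt_nhds one_pos), hlog.eventually_gt_atTop 0,
    eventually_ne_atTop 0] with n hun hlon hhin hcn hsmalln hlogn hn
  have hbx : log (K * log n) ≤ log n := ((div_lt_one hlogn).1 hsmalln).le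
  exact hcn.trans_le (mul_sub_log_le_mul_log_div (Nat.cast_ne_zero.2 hn) hun hlon hhin hbx)

lemma div_le_of_lt_div_of_inv_le {m u L s : ℝ} (hs : 0 < s) (hu : 0 < u) (hL : s⁻¹ ≤ L)
    (h : m < u / L) : m / s ≤ u := by
  rcases le_or_gt m 0 with hm | hm
  · exact (div_nonpos_of_nonpos_of_nonneg hm hs.le).trans hu.le
  · have hL0 : 0 < L := (inv_pos.2 hs).trans_le hL
    calc m / s = m * s⁻¹ := div_eq_mul_inv m s
      _ ≤ m * L := mul_le_mul_of_nonneg_left hL hm.le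
      _ ≤ u := ((lt_div_iff₀ hL0).1 h).le

lemma tendsto_log_natCast_sq_atTop :
    Tendsto (fun n : ℕ => log ((n : ℝ) ^ 2)) atTop atTop :=
  tendsto_log_atTop.comp ((tendsto_pow_atTop two_ne_zero).comp tendsto_natCast_atTop_atTop)

lemma eventually_div_log_le_of_lt_liminf {u : ℕ → ℝ} {m : ℝ} (hu : ∀ᶠ n in atTop, 0 < u n)
    (h : ((2 * m : ℝ) : EReal) <
      liminf (fun n : ℕ => ((u n / loglogSin ((n : ℝ) ^ 2) : ℝ) : EReal)) atTop) :
    ∀ᶠ n : ℕ in atTop, m / log n ≤ u n := by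
  filter_upwards [hu, eventually_lt_of_lt_liminf h,
    tendsto_log_natCast_sq_atTop.eventually_ge_atTop 1] with n hun hn hlog
  have key := div_le_of_lt_div_of_inv_le (by linarith) hun (inv_log_le_loglogSin hlog)
    (EReal.coe_lt_coe_iff.1 hn)
  rwa [log_pow, Nat.cast_ofNat, mul_div_mul_left _ _ two_ne_zero] at key

lemma eventually_le_mul_log_of_limsup_lt {u : ℕ → ℝ} {C : ℝ} (hC : 0 ≤ C)
    (h : limsup (fun n : ℕ => ((u n / loglogSin ((n : ℝ) ^ 2) : ℝ) : EReal)) atTop < C) :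
    ∀ᶠ n : ℕ in atTop, u n ≤ 2 * C * log n := by
  filter_upwards [eventually_lt_of_limsup_lt h,
    tendsto_log_natCast_sq_atTop.eventually_ge_atTop 1] with n hn hlog
  have hL0 : 0 < loglogSin ((n : ℝ) ^ 2) := exp_pos _
  calc u n ≤ C * loglogSin ((n : ℝ) ^ 2) := ((div_lt_iff₀ hL0).1 (EReal.coe_lt_coe_iff.1 hn)).le
    _ ≤ C * log ((n : ℝ) ^ 2) := mul_le_mul_of_nonneg_left (loglogSin_le_log hlog) hC
    _ = 2 * C * log n := by rw [log_pow]; push_cast; ring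

lemma coe_le_liminf_of_forall_eventually_lt {ι : Type*} {l : Filter ι} {f : ι → ℝ} {a : ℝ}
    (h : ∀ c < a, ∀ᶠ i in l, c < f i) : (a : EReal) ≤ liminf (fun i => (f i : EReal)) l :=
  EReal.ge_of_forall_gt_iff_ge.1 fun c hc => le_liminf_of_le (by isBoundedDefault)
    ((h c (EReal.coe_lt_coe_iff.1 hc)).mono fun _ hi => (EReal.coe_lt_coe_iff.2 hi).le)

theorem stmt_10_general (p : ℕ → ℝ) (hp : ∀ n, p n ∈ Set.Ioo (0 : ℝ) 1)
    (Alo Ahi : ℝ)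
    (hliminf : (Alo : EReal) ≤
      Filter.liminf
        (fun n : ℕ =>
          (((n : ℝ) * p n /
            Real.exp (Real.log (Real.log ((n : ℝ) ^ 2)) *
              Real.sin (Real.log (Real.log ((n : ℝ) ^ 2))))) : EReal))
        Filter.atTop)
    (hlimsup :
      Filter.limsup
        (fun n : ℕ =>
          (((n : ℝ) * p n /
            Real.exp (Real.log (Real.log ((n : ℝ) ^ 2)) *
              Real.sin (Real.log (Real.log ((n : ℝ) ^ 2))))) : EReal))
        Filter.atTop ≤ (Ahi : EReal)) :
    ((Alo / 2 : ℝ) : EReal) ≤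
      Filter.liminf
        (fun n : ℕ => (((n : ℝ) * p n * Real.log (1 / p n)) : EReal))
        Filter.atTop := by
  set u : ℕ → ℝ := fun n => n * p n
  have hu : ∀ᶠ n in atTop, 0 < u n := by
    filter_upwards [eventually_gt_atTop 0] with n hn
    exact mul_pos (Nat.cast_pos.2 hn) (hp n).1
  simp only [← EReal.coe_mul, ← EReal.coe_div] at hliminf hlimsup ⊢
  refine coe_le_liminf_of_forall_eventually_lt fun c hc => ?_
  obtain ⟨m, hcm, hm⟩ := exists_between hc
  have hlo := eventually_div_log_le_of_lt_liminf hu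
    (lt_of_lt_of_le (EReal.coe_lt_coe_iff.2 (by linarith)) hliminf)
  have hhi := eventually_le_mul_log_of_limsup_lt (C := |Ahi| + 1) (by positivity)
    (hlimsup.trans_lt (EReal.coe_lt_coe_iff.2 (by linarith [le_abs_self Ahi])))
  filter_upwards [eventually_lt_mul_log_div (by positivity) hcm hu hlo hhi,
    eventually_ne_atTop 0] with n hn hn0
  rwa [div_mul_cancel_left₀ (Nat.cast_ne_zero.2 hn0), ← one_div] at hn

/-- Let `L(x) = exp((log log x)·sin(log log x))`, `p : ℕ → (0,1)`,
`G_n = n·p_n·log(1/p_n)` and `a_n = n·p_n / L(n²)`. If `0 < A₋ ≤ A₊ < ∞` are such that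
`A₋ ≤ liminf a_n` and `limsup a_n ≤ A₊`, then `A₋/2 ≤ liminf G_n`. -/
theorem stmt_10 (p : ℕ → ℝ) (hp : ∀ n, p n ∈ Set.Ioo (0 : ℝ) 1)
    (Alo Ahi : ℝ) (hAlo : 0 < Alo) (hA : Alo ≤ Ahi)
    (hliminf : (Alo : EReal) ≤
      Filter.liminf
        (fun n : ℕ =>
          (((n : ℝ) * p n /
            Real.exp (Real.log (Real.log ((n : ℝ) ^ 2)) *
              Real.sin (Real.log (Real.log ((n : ℝ) ^ 2))))) : EReal))
        Filter.atTop)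
    (hlimsup :
      Filter.limsup
        (fun n : ℕ =>
          (((n : ℝ) * p n /
            Real.exp (Real.log (Real.log ((n : ℝ) ^ 2)) *
              Real.sin (Real.log (Real.log ((n : ℝ) ^ 2))))) : EReal))
        Filter.atTop ≤ (Ahi : EReal)) :
    ((Alo / 2 : ℝ) : EReal) ≤
      Filter.liminf
        (fun n : ℕ => (((n : ℝ) * p n * Real.log (1 / p n)) : EReal))
        Filter.atTop :=
  stmt_10_general p hp Alo Ahi hliminf hlimsup
end

section
/- Let β > 1/2, let L : (0,∞) → (0,∞) be slowly varying at infinity, and let f : (0,1) → [0,∞) be a probability density on (0,1) (i.e., ∫₀¹ f = 1) such that f(u) / ((1−u)^{β−1} · L(1/(1−u))) → 1 as u ↑ 1. Define I_n := ∫₀¹ n · ((1 − √(1−x))/x)^n · f(x) dx for n ∈ ℕ. Then I_n → 0 as n → ∞. -/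
/-!
Since `(1 - √(1 - x)) / x = (1 + √(1 - x))⁻¹`, the bound `n rⁿ ≤ (1 - r)⁻¹` gives
`n ((1 - √(1 - x)) / x)ⁿ ≤ 2 / √(1 - x)`, and the integrand tends to `0` pointwise, so by dominated
convergence it suffices that `f x / √(1 - x)` is integrable on `(0, 1)`.

Near `x = 1` put `g t = f (1 - t)`, so `g t ≈ t ^ (β - 1) L (1 / t)` as `t ↓ 0`. Slow variation
gives `L (2 y) ≤ q L y` for large `y` and any `q > 1`, hence `g t ≤ 4 ρᵏ g (2ᵏ t)` for small `t`
and any `ρ > 2 ^ (1 - β)`. As `L` need not be measurable or locally bounded, `g` is compared with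
itself at a rescaled point rather than with a power of `t`. Summing over the dyadic shells
`2ᵏ t ∈ (δ / 2, δ]` bounds `∫₀^δ g t / √t` by `∫_{δ/2}^δ g t / √t` times a geometric series of
ratio `ρ / √2`, and `ρ < √2` can be chosen exactly because `β > 1 / 2`.
-/

open MeasureTheory Set Filter Topology
open scoped ENNReal

theorem one_sub_sqrt_one_sub_div_eq {x : ℝ} (hx0 : x ≠ 0) (hx1 : x ≤ 1) :
    (1 - √(1 - x)) / x = (1 + √(1 - x))⁻¹ := by
  have hs : √(1 - x) ^ 2 = 1 - x := Real.sq_sqrt (by linarith)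
  have h1s : 1 - √(1 - x) ≠ 0 := fun h => hx0 (by nlinarith)
  have : 0 ≤ √(1 - x) := Real.sqrt_nonneg _
  field_simp
  nlinarith

theorem one_sub_sqrt_one_sub_div_mem_Ico {x : ℝ} (hx : x ∈ Ioo 0 1) :
    (1 - √(1 - x)) / x ∈ Ico 0 1 := by
  rw [one_sub_sqrt_one_sub_div_eq hx.1.ne' hx.2.le]
  have : 0 < √(1 - x) := Real.sqrt_pos.2 (by linarith [hx.2])
  exact ⟨by positivity, inv_lt_one_of_one_lt₀ (by linarith)⟩

theorem nat_mul_pow_le_inv_one_sub {r : ℝ} (hr0 : 0 ≤ r) (hr1 : r < 1) (n : ℕ) :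
    n * r ^ n ≤ (1 - r)⁻¹ :=
  calc n * r ^ n = ∑ _i ∈ Finset.range n, r ^ n := by simp
    _ ≤ ∑ i ∈ Finset.range n, r ^ i := Finset.sum_le_sum fun i hi =>
        pow_le_pow_of_le_one hr0 hr1.le (Finset.mem_range.1 hi).le
    _ ≤ ∑' i, r ^ i := Summable.sum_le_tsum _ (fun i _ => pow_nonneg hr0 i)
        (summable_geometric_of_lt_one hr0 hr1)
    _ = (1 - r)⁻¹ := tsum_geometric_of_lt_one hr0 hr1

theorem nat_mul_one_sub_sqrt_one_sub_div_pow_le {x : ℝ} (hx : x ∈ Ioo 0 1) (n : ℕ) :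
    n * ((1 - √(1 - x)) / x) ^ n ≤ 2 / √(1 - x) := by
  obtain ⟨hr0, hr1⟩ := one_sub_sqrt_one_sub_div_mem_Ico hx
  refine (nat_mul_pow_le_inv_one_sub hr0 hr1 n).trans ?_
  have hs0 : 0 < √(1 - x) := Real.sqrt_pos.2 (by linarith [hx.2])
  have hs1 : √(1 - x) ≤ 1 := Real.sqrt_le_one.2 (by linarith [hx.1])
  rw [one_sub_sqrt_one_sub_div_eq hx.1.ne' hx.2.le,
    show 1 - (1 + √(1 - x))⁻¹ = √(1 - x) / (1 + √(1 - x)) by field_simp; ring, inv_div]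
  exact div_le_div_of_nonneg_right (by linarith) hs0.le

theorem tendsto_integral_nat_mul_one_sub_sqrt_one_sub_div_pow_mul {f : ℝ → ℝ}
    (hf : IntegrableOn f (Ioo 0 1)) (hdom : IntegrableOn (fun x => f x / √(1 - x)) (Ioo 0 1)) :
    Tendsto (fun n : ℕ => ∫ x in Ioo 0 1, (n : ℝ) * ((1 - √(1 - x)) / x) ^ n * f x)
      atTop (𝓝 0) := by
  have hlim := tendsto_integral_of_dominated_convergence (fun x => 2 * ‖f x / √(1 - x)‖)
    (F := fun (n : ℕ) x => (n : ℝ) * ((1 - √(1 - x)) / x) ^ n * f x) (f := fun _ => 0)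
    (fun n => (by fun_prop : Measurable fun x : ℝ =>
      (n : ℝ) * ((1 - √(1 - x)) / x) ^ n).aestronglyMeasurable.mul hf.1)
    (hdom.norm.const_mul 2) (fun n => ?_) ?_
  · simpa using hlim
  · filter_upwards [ae_restrict_mem measurableSet_Ioo] with x hx
    have hs0 : 0 < √(1 - x) := Real.sqrt_pos.2 (by linarith [hx.2])
    obtain ⟨hr0, -⟩ := one_sub_sqrt_one_sub_div_mem_Ico hx
    rw [norm_mul, norm_div, Real.norm_of_nonneg (by positivity), Real.norm_of_nonneg hs0.le]
    calc _ ≤ 2 / √(1 - x) * ‖f x‖ :=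
          mul_le_mul_of_nonneg_right (nat_mul_one_sub_sqrt_one_sub_div_pow_le hx n) (norm_nonneg _)
      _ = 2 * (‖f x‖ / √(1 - x)) := by ring
  · filter_upwards [ae_restrict_mem measurableSet_Ioo] with x hx
    obtain ⟨hr0, hr1⟩ := one_sub_sqrt_one_sub_div_mem_Ico hx
    simpa using (tendsto_self_mul_const_pow_of_lt_one hr0 hr1).mul_const (f x)

theorem integrableOn_Ioo_comp_one_sub_iff {E : Type*} [NormedAddCommGroup E] {F : ℝ → E} :
    IntegrableOn (fun t => F (1 - t)) (Ioo 0 1) ↔ IntegrableOn F (Ioo 0 1) := by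
  have := (Measure.measurePreserving_sub_left volume (1 : ℝ)).integrableOn_comp_preimage
    (measurableEmbedding_subLeft 1) (f := F) (s := Ioo 0 1)
  simpa [preimage_const_sub_Ioo, Function.comp_def] using this

theorem setLIntegral_comp_mul_left {a : ℝ} (ha : 0 < a) (h : ℝ → ℝ≥0∞) (s : Set ℝ) :
    ∫⁻ t in (a * ·) ⁻¹' s, h (a * t) = ENNReal.ofReal a⁻¹ * ∫⁻ t in s, h t := by
  have e : MeasurableEmbedding (a * ·) := (Homeomorph.mulLeft₀ a ha.ne').measurableEmbedding
  rw [← e.lintegral_map, ← e.restrict_map, Real.map_volume_mul_left ha.ne', Measure.restrict_smul,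
    lintegral_smul_measure, smul_eq_mul, abs_of_pos (inv_pos.2 ha)]

theorem Ioc_zero_subset_iUnion_preimage_two_pow_mul {δ : ℝ} :
    Ioc 0 δ ⊆ ⋃ k : ℕ, (2 ^ k * ·) ⁻¹' Ioc (δ / 2) δ := by
  rintro t ⟨ht0, htδ⟩
  obtain ⟨k, hk, hk'⟩ := exists_nat_pow_near ((one_le_div ht0).2 htδ) one_lt_two
  refine mem_iUnion.2 ⟨k, ?_, ?_⟩
  · rw [div_lt_iff₀ ht0, pow_succ] at hk'
    simp only
    linarith
  · simpa only [le_div_iff₀ ht0] using hk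

theorem lintegral_Ioc_zero_le_of_le_two_pow_mul {h : ℝ → ℝ≥0∞} {δ : ℝ} {c r : ℝ≥0∞}
    (hc : c ≠ ∞) (hr : r ≠ ∞)
    (hh : ∀ (k : ℕ) (t : ℝ), 2 ^ k * t ∈ Ioc (δ / 2) δ → h t ≤ c * r ^ k * h (2 ^ k * t)) :
    ∫⁻ t in Ioc 0 δ, h t ≤ c * (∑' k : ℕ, (r / 2) ^ k) * ∫⁻ t in Ioc (δ / 2) δ, h t := by
  have hshell (k : ℕ) : ∫⁻ t in (2 ^ k * ·) ⁻¹' Ioc (δ / 2) δ, h t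
      ≤ c * (r / 2) ^ k * ∫⁻ t in Ioc (δ / 2) δ, h t :=
    calc ∫⁻ t in (2 ^ k * ·) ⁻¹' Ioc (δ / 2) δ, h t
        ≤ ∫⁻ t in (2 ^ k * ·) ⁻¹' Ioc (δ / 2) δ, c * r ^ k * h (2 ^ k * t) :=
          setLIntegral_mono_ae' (measurableSet_Ioc.preimage (measurable_const_mul _))
            (ae_of_all _ (hh k))
      _ = c * r ^ k * ENNReal.ofReal (2 ^ k)⁻¹ * ∫⁻ t in Ioc (δ / 2) δ, h t := by
          rw [lintegral_const_mul' _ _ (ENNReal.mul_ne_top hc (ENNReal.pow_ne_top hr)),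
            setLIntegral_comp_mul_left (by positivity)]
          ring
      _ = c * (r / 2) ^ k * ∫⁻ t in Ioc (δ / 2) δ, h t := by
          rw [ENNReal.ofReal_inv_of_pos (by positivity), ENNReal.ofReal_pow zero_le_two,
            ENNReal.ofReal_ofNat, ENNReal.div_eq_inv_mul, mul_pow, ENNReal.inv_pow]
          ring
  calc ∫⁻ t in Ioc 0 δ, h t ≤ ∫⁻ t in ⋃ k : ℕ, (2 ^ k * ·) ⁻¹' Ioc (δ / 2) δ, h t :=
        lintegral_mono_set Ioc_zero_subset_iUnion_preimage_two_pow_mul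
    _ ≤ ∑' k : ℕ, ∫⁻ t in (2 ^ k * ·) ⁻¹' Ioc (δ / 2) δ, h t := lintegral_iUnion_le _ _
    _ ≤ ∑' k : ℕ, c * (r / 2) ^ k * ∫⁻ t in Ioc (δ / 2) δ, h t := ENNReal.tsum_le_tsum hshell
    _ = c * (∑' k : ℕ, (r / 2) ^ k) * ∫⁻ t in Ioc (δ / 2) δ, h t := by
        rw [ENNReal.tsum_mul_right, ENNReal.tsum_mul_left]

theorem integrableOn_Ioc_zero_of_norm_le_two_pow_mul {E : Type*} [NormedAddCommGroup E]
    {F : ℝ → E} {δ C r : ℝ} (hr0 : 0 ≤ r) (hr2 : r < 2)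
    (hF : AEStronglyMeasurable F (volume.restrict (Ioc 0 δ)))
    (hFi : IntegrableOn F (Ioc (δ / 2) δ))
    (hle : ∀ (k : ℕ) (t : ℝ), 2 ^ k * t ∈ Ioc (δ / 2) δ → ‖F t‖ ≤ C * r ^ k * ‖F (2 ^ k * t)‖) :
    IntegrableOn F (Ioc 0 δ) := by
  have hgeom : ∑' k : ℕ, (ENNReal.ofReal r / 2) ^ k ≠ ∞ := by
    rw [ENNReal.tsum_geometric, ENNReal.inv_ne_top, ← ENNReal.ofReal_ofNat 2,
      ← ENNReal.ofReal_div_of_pos two_pos]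
    exact (tsub_pos_of_lt (ENNReal.ofReal_lt_one.2 (by linarith))).ne'
  refine ⟨hF, ?_⟩
  calc ∫⁻ t in Ioc 0 δ, ‖F t‖ₑ
      ≤ ENNReal.ofReal C * (∑' k : ℕ, (ENNReal.ofReal r / 2) ^ k) *
          ∫⁻ t in Ioc (δ / 2) δ, ‖F t‖ₑ := by
        refine lintegral_Ioc_zero_le_of_le_two_pow_mul ENNReal.ofReal_ne_top
          ENNReal.ofReal_ne_top fun k t ht => ?_
        rw [← ofReal_norm, ← ofReal_norm, ← ENNReal.ofReal_pow hr0, mul_assoc,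
          ← ENNReal.ofReal_mul (by positivity), ← ENNReal.ofReal_mul' (by positivity), ← mul_assoc]
        exact ENNReal.ofReal_le_ofReal (hle k t ht)
    _ < ∞ := ENNReal.mul_lt_top (ENNReal.mul_lt_top ENNReal.ofReal_lt_top hgeom.lt_top) hFi.2

theorem IntegrableOn.div_sqrt_of_subset_Ici {g : ℝ → ℝ} {s : Set ℝ} {a : ℝ}
    (hg : IntegrableOn g s) (hs : MeasurableSet s) (ha : 0 < a) (hsa : s ⊆ Ici a) :
    IntegrableOn (fun t => g t / √t) s := by
  refine Integrable.mono' (hg.norm.div_const √a)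
    (hg.1.div₀ Real.continuous_sqrt.aestronglyMeasurable) (ae_restrict_of_forall_mem hs ?_)
  intro t ht
  rw [norm_div, Real.norm_of_nonneg (Real.sqrt_nonneg t)]
  exact div_le_div_of_nonneg_left (norm_nonneg _) (Real.sqrt_pos.2 ha)
    (Real.sqrt_le_sqrt (hsa ht))

theorem eventually_le_mul_and_le_mul_of_tendsto_div {α : Type*} {l : Filter α} {a b : α → ℝ}
    {c : ℝ} (hc : 1 < c) (hb : ∀ᶠ x in l, 0 < b x) (h : Tendsto (fun x => a x / b x) l (𝓝 1)) :
    ∀ᶠ x in l, a x ≤ c * b x ∧ b x ≤ c * a x := by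
  have hc0 : 0 < c := zero_lt_one.trans hc
  filter_upwards [hb, h.eventually (Ioo_mem_nhds (inv_lt_one_of_one_lt₀ hc) hc)]
    with x hbx ⟨hlo, hhi⟩
  refine ⟨(div_le_iff₀ hbx).1 hhi.le, ?_⟩
  rw [inv_lt_iff_one_lt_mul₀ hc0, div_mul_eq_mul_div, one_lt_div hbx] at hlo
  linarith

theorem le_pow_mul_of_le_mul_two {Φ : ℝ → ℝ} {ρ δ : ℝ} (hρ : 0 ≤ ρ)
    (h : ∀ t, 0 < t → 2 * t ≤ δ → Φ t ≤ ρ * Φ (2 * t)) (k : ℕ) {t : ℝ} (ht : 0 < t)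
    (hkt : 2 ^ k * t ≤ δ) : Φ t ≤ ρ ^ k * Φ (2 ^ k * t) := by
  induction k generalizing t with
  | zero => simp
  | succ k ih =>
    have hk : 2 ^ k * (2 * t) = 2 ^ (k + 1) * t := by ring
    have h2t : 2 * t ≤ δ := le_trans (by gcongr; exact le_self_pow₀ one_le_two k.succ_ne_zero) hkt
    calc Φ t ≤ ρ * Φ (2 * t) := h t ht h2t
      _ ≤ ρ * (ρ ^ k * Φ (2 ^ k * (2 * t))) :=
          mul_le_mul_of_nonneg_left (ih (by positivity) (hk ▸ hkt)) hρ
      _ = ρ ^ (k + 1) * Φ (2 ^ (k + 1) * t) := by rw [hk]; ring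

theorem eventually_rpow_mul_le_mul_two {β ρ : ℝ} {L : ℝ → ℝ} (hLpos : ∀ x, 0 < x → 0 < L x)
    (hL : Tendsto (fun y => L (2 * y) / L y) atTop (𝓝 1)) (hρ : (2 : ℝ) ^ (1 - β) < ρ) :
    ∀ᶠ t in 𝓝[>] 0, t ^ (β - 1) * L (1 / t) ≤ ρ * ((2 * t) ^ (β - 1) * L (1 / (2 * t))) := by
  have h2β : (0 : ℝ) < 2 ^ (1 - β) := by positivity
  set q := ρ / 2 ^ (1 - β)
  have hq : 1 < q := (one_lt_div h2β).2 hρ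
  have hinv : Tendsto (fun t : ℝ => 1 / (2 * t)) (𝓝[>] 0) atTop :=
    (tendsto_inv_nhdsGT_zero.atTop_mul_const (inv_pos.2 two_pos)).congr fun t => by ring
  have hLq := eventually_le_mul_and_le_mul_of_tendsto_div hq
    (hinv.eventually (eventually_gt_atTop 0) |>.mono fun t ht => hLpos _ ht) (hL.comp hinv)
  filter_upwards [hLq, self_mem_nhdsWithin] with t ht (ht0 : 0 < t)
  have h2t : 2 * (1 / (2 * t)) = 1 / t := by field_simp
  have hpow : (2 * t) ^ (β - 1) = t ^ (β - 1) / 2 ^ (1 - β) := by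
    rw [Real.mul_rpow zero_le_two ht0.le, ← neg_sub, Real.rpow_neg zero_le_two]
    ring
  calc t ^ (β - 1) * L (1 / t) ≤ t ^ (β - 1) * (q * L (1 / (2 * t))) := by
        rw [← h2t]; exact mul_le_mul_of_nonneg_left ht.1 (by positivity)
    _ = ρ * ((2 * t) ^ (β - 1) * L (1 / (2 * t))) := by rw [hpow]; ring

theorem exists_le_four_mul_pow_mul_of_tendsto {β ρ : ℝ} {L g : ℝ → ℝ}
    (hLpos : ∀ x, 0 < x → 0 < L x) (hL : Tendsto (fun y => L (2 * y) / L y) atTop (𝓝 1))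
    (hg : Tendsto (fun t => g t / (t ^ (β - 1) * L (1 / t))) (𝓝[>] 0) (𝓝 1))
    (hρ : (2 : ℝ) ^ (1 - β) < ρ) :
    ∃ δ > 0, ∀ (k : ℕ) (t : ℝ), 0 < t → 2 ^ k * t ≤ δ → g t ≤ 4 * ρ ^ k * g (2 ^ k * t) := by
  set Φ : ℝ → ℝ := fun t => t ^ (β - 1) * L (1 / t)
  have hΦpos : ∀ᶠ t in 𝓝[>] 0, 0 < Φ t := eventually_mem_nhdsWithin.mono fun t (ht : 0 < t) =>
    mul_pos (Real.rpow_pos_of_pos ht _) (hLpos _ (by positivity))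
  have hρ0 : 0 ≤ ρ := (Real.rpow_nonneg zero_le_two _).trans hρ.le
  obtain ⟨δ, hδ0, hδ⟩ := mem_nhdsGT_iff_exists_Ioc_subset.1
    ((eventually_rpow_mul_le_mul_two hLpos hL hρ).and
      (eventually_le_mul_and_le_mul_of_tendsto_div one_lt_two hΦpos hg))
  refine ⟨δ, hδ0, fun k t ht hkt => ?_⟩
  have hk : 0 < 2 ^ k * t := by positivity
  have htδ : t ≤ δ := le_trans (le_mul_of_one_le_left ht.le (one_le_pow₀ one_le_two)) hkt
  have hiter : Φ t ≤ ρ ^ k * Φ (2 ^ k * t) :=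
    le_pow_mul_of_le_mul_two hρ0 (fun s hs h2s => (hδ ⟨hs, by linarith⟩).1) k ht hkt
  calc g t ≤ 2 * Φ t := (hδ ⟨ht, htδ⟩).2.1
    _ ≤ 2 * (ρ ^ k * (2 * g (2 ^ k * t))) := by
        gcongr
        exact hiter.trans (mul_le_mul_of_nonneg_left (hδ ⟨hk, hkt⟩).2.2 (by positivity))
    _ = 4 * ρ ^ k * g (2 ^ k * t) := by ring

theorem norm_div_sqrt_le_of_le_four_mul_pow_mul {g : ℝ → ℝ} {ρ δ : ℝ}
    (hdy : ∀ (k : ℕ) (t : ℝ), 0 < t → 2 ^ k * t ≤ δ → g t ≤ 4 * ρ ^ k * g (2 ^ k * t))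
    (k : ℕ) {t : ℝ} (ht : 0 < t) (hkt : 2 ^ k * t ≤ δ) :
    ‖g t / √t‖ ≤ 4 * (ρ * √2) ^ k * ‖g (2 ^ k * t) / √(2 ^ k * t)‖ := by
  -- the case `k = 0` of the comparison reads `g t ≤ 4 * g t`
  have hg0 : ∀ s, 0 < s → s ≤ δ → 0 ≤ g s := fun s hs hsδ => by
    have := hdy 0 s hs (by simpa using hsδ)
    simp only [pow_zero, mul_one, one_mul] at this
    linarith
  have hk : 0 < 2 ^ k * t := by positivity
  have htδ : t ≤ δ := le_trans (le_mul_of_one_le_left ht.le (one_le_pow₀ one_le_two)) hkt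
  have hsqrt : √(2 ^ k * t) = √2 ^ k * √t := by
    rw [Real.sqrt_mul (by positivity)]
    congr 1
    rw [Real.sqrt_eq_iff_eq_sq (by positivity) (by positivity), ← pow_mul, mul_comm, pow_mul,
      Real.sq_sqrt zero_le_two]
  rw [Real.norm_of_nonneg (div_nonneg (hg0 t ht htδ) (Real.sqrt_nonneg t)),
    Real.norm_of_nonneg (div_nonneg (hg0 _ hk hkt) (Real.sqrt_nonneg _)), hsqrt, mul_pow]
  calc g t / √t ≤ 4 * ρ ^ k * g (2 ^ k * t) / √t := by gcongr; exact hdy k t ht hkt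
    _ = 4 * (ρ ^ k * √2 ^ k) * (g (2 ^ k * t) / (√2 ^ k * √t)) := by field_simp

theorem integrableOn_div_sqrt_of_tendsto {β : ℝ} (hβ : 1 / 2 < β) {L g : ℝ → ℝ}
    (hLpos : ∀ x, 0 < x → 0 < L x) (hL : Tendsto (fun y => L (2 * y) / L y) atTop (𝓝 1))
    (hgi : IntegrableOn g (Ioo 0 1))
    (hg : Tendsto (fun t => g t / (t ^ (β - 1) * L (1 / t))) (𝓝[>] 0) (𝓝 1)) :
    IntegrableOn (fun t => g t / √t) (Ioo 0 1) := by
  obtain ⟨ρ, hρβ, hρ2⟩ : ∃ ρ, (2 : ℝ) ^ (1 - β) < ρ ∧ ρ < √2 := exists_between <| by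
    rw [Real.sqrt_eq_rpow]; exact Real.rpow_lt_rpow_of_exponent_lt one_lt_two (by linarith)
  have hρ0 : 0 ≤ ρ := (Real.rpow_nonneg zero_le_two _).trans hρβ.le
  obtain ⟨δ, hδ0, hdy⟩ := exists_le_four_mul_pow_mul_of_tendsto hLpos hL hg hρβ
  set ε := min δ (1 / 2)
  have hε0 : 0 < ε := lt_min hδ0 one_half_pos
  have hε1 : ε < 1 := (min_le_right _ _).trans_lt one_half_lt_one
  have hnear : IntegrableOn (fun t => g t / √t) (Ioc 0 ε) := by
    refine integrableOn_Ioc_zero_of_norm_le_two_pow_mul (C := 4) (r := ρ * √2) (by positivity) ?_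
      ((hgi.1.div₀ Real.continuous_sqrt.aestronglyMeasurable).mono_set (Ioc_subset_Ioo_right hε1))
      (IntegrableOn.div_sqrt_of_subset_Ici (hgi.mono_set (Ioc_subset_Ioo (by positivity) hε1))
        measurableSet_Ioc (half_pos hε0) fun _ h => h.1.le) fun k t ht => ?_
    · nlinarith [Real.mul_self_sqrt (zero_le_two : (0 : ℝ) ≤ 2), Real.sqrt_nonneg 2]
    have hk : 0 < 2 ^ k * t := (half_pos hε0).trans ht.1
    exact norm_div_sqrt_le_of_le_four_mul_pow_mul hdy k (pos_of_mul_pos_right hk (by positivity))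
      (ht.2.trans (min_le_left _ _))
  have hfar : IntegrableOn (fun t => g t / √t) (Ico ε 1) :=
    IntegrableOn.div_sqrt_of_subset_Ici (hgi.mono_set (Ico_subset_Ioo_left hε0))
      measurableSet_Ico hε0 Ico_subset_Ici_self
  refine (hnear.union hfar).mono_set fun t ht => ?_
  rcases le_or_gt t ε with htε | htε
  exacts [Or.inl ⟨ht.1, htε⟩, Or.inr ⟨htε.le, ht.2⟩]

theorem stmt_15_general (β : ℝ) (hβ : 1 / 2 < β) (L : ℝ → ℝ) (hLpos : ∀ x : ℝ, 0 < x → 0 < L x)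
    (hslow : ∀ l : ℝ, 0 < l →
      Filter.Tendsto (fun x : ℝ => L (l * x) / L x) Filter.atTop (nhds 1))
    (f : ℝ → ℝ)
    (hfint : ∫ u in Set.Ioo (0 : ℝ) 1, f u = 1)
    (hedge : Filter.Tendsto
      (fun u : ℝ => f u / ((1 - u) ^ (β - 1) * L (1 / (1 - u))))
      (nhdsWithin 1 (Set.Ioo 0 1)) (nhds 1)) :
    Filter.Tendsto
      (fun n : ℕ =>
        ∫ x in Set.Ioo (0 : ℝ) 1, (n : ℝ) * ((1 - Real.sqrt (1 - x)) / x) ^ n * f x)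
      Filter.atTop (nhds 0) := by
  have hf : IntegrableOn f (Ioo 0 1) := integrable_of_integral_eq_one hfint
  have hreflect : Tendsto (fun t : ℝ => 1 - t) (𝓝[>] 0) (𝓝[Ioo 0 1] 1) := by
    refine tendsto_nhdsWithin_iff.2 ⟨?_, ?_⟩
    · simpa using ((continuous_sub_left (1 : ℝ)).tendsto 0).mono_left nhdsWithin_le_nhds
    · filter_upwards [Ioo_mem_nhdsGT one_pos] with t ht
      exact ⟨by linarith [ht.2], by linarith [ht.1]⟩
  have hg : Tendsto (fun t => f (1 - t) / (t ^ (β - 1) * L (1 / t))) (𝓝[>] 0) (𝓝 1) := by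
    simpa only [Function.comp_def, sub_sub_cancel] using hedge.comp hreflect
  have hdom := integrableOn_div_sqrt_of_tendsto hβ hLpos (hslow 2 two_pos)
    (integrableOn_Ioo_comp_one_sub_iff.2 hf) hg
  refine tendsto_integral_nat_mul_one_sub_sqrt_one_sub_div_pow_mul hf ?_
  exact integrableOn_Ioo_comp_one_sub_iff.1 (by simpa only [sub_sub_cancel] using hdom)

/-- If `β > 1/2`, `L` is slowly varying, and `f` is a probability density on `(0,1)` with
`f(u)/((1−u)^(β−1)·L(1/(1−u))) → 1` as `u ↑ 1`, then
`I_n := ∫₀¹ n·((1 − √(1−x))/x)^n f(x) dx → 0`. -/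
theorem stmt_15 (β : ℝ) (hβ : 1 / 2 < β) (L : ℝ → ℝ) (hLpos : ∀ x : ℝ, 0 < x → 0 < L x)
    (hslow : ∀ l : ℝ, 0 < l →
      Filter.Tendsto (fun x : ℝ => L (l * x) / L x) Filter.atTop (nhds 1))
    (f : ℝ → ℝ) (hf0 : ∀ u ∈ Set.Ioo (0 : ℝ) 1, 0 ≤ f u)
    (hfint : ∫ u in Set.Ioo (0 : ℝ) 1, f u = 1)
    (hedge : Filter.Tendsto
      (fun u : ℝ => f u / ((1 - u) ^ (β - 1) * L (1 / (1 - u))))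
      (nhdsWithin 1 (Set.Ioo 0 1)) (nhds 1)) :
    Filter.Tendsto
      (fun n : ℕ =>
        ∫ x in Set.Ioo (0 : ℝ) 1, (n : ℝ) * ((1 - Real.sqrt (1 - x)) / x) ^ n * f x)
      Filter.atTop (nhds 0) :=
  stmt_15_general β hβ L hLpos hslow f hfint hedge
end

section
/- Let β > 0, let L : (0,∞) → (0,∞) be slowly varying at infinity, and let f : (0,1) → [0,∞) be a probability density on (0,1) such that f(u) / ((1−u)^{β−1} · L(1/(1−u))) → 1 as u ↑ 1. Define J_n := ∫₀¹ n · ((1 − √(1−x²))/x)^n · f(x) dx for n ∈ ℕ. Then liminf_{n→∞} J_n / (n^{1−2β} · L(n²)) ≥ 2^{1−β} · Γ(2β), where Γ denotes the Gamma function. -/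
open MeasureTheory Filter Set Real Topology
open scoped ENNReal

/-!
Substituting `x = 1 - s / n²` turns `J_n / (n ^ (1 - 2β) L(n²))` into a Lebesgue integral over
`s > 0` whose integrand converges pointwise: `hitProb (1 - s / n²) ^ n → exp (-√(2s))`, the edge
behaviour of `f` contributes `(s / n²) ^ (β - 1) L(n² / s)`, and slow variation replaces `L(n² / s)`
by `L(n²)`. The limit `s ^ (β - 1) exp (-√(2s))` integrates to `2 ^ (1 - β) Γ(2β)`, and Fatou's
lemma gives the bound.
-/

/-- The probability that a simple random walk, surviving each step with probability `x`, ever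
reaches `+1`; thus `P(D^→ ≥ n) = hitProb x ^ n`. -/
noncomputable def hitProb (x : ℝ) : ℝ := (1 - √(1 - x ^ 2)) / x

lemma hitProb_nonneg {x : ℝ} (hx : x ∈ Ioo (0 : ℝ) 1) : 0 ≤ hitProb x :=
  div_nonneg (sub_nonneg.2 (sqrt_le_one.2 (by nlinarith [hx.1]))) hx.1.le

lemma hitProb_le_one {x : ℝ} (hx : x ∈ Ioo (0 : ℝ) 1) : hitProb x ≤ 1 := by
  have h : 1 - x ≤ √(1 - x ^ 2) :=
    le_sqrt_of_sq_le (by nlinarith [hx.1, hx.2])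
  rw [hitProb, div_le_one hx.1]
  linarith

lemma measurable_hitProb : Measurable hitProb := by
  unfold hitProb
  fun_prop

lemma tendsto_div_natCast_sq (s : ℝ) : Tendsto (fun n : ℕ => s / (n : ℝ) ^ 2) atTop (𝓝 0) :=
  tendsto_const_nhds.div_atTop ((tendsto_pow_atTop two_ne_zero).comp tendsto_natCast_atTop_atTop)

lemma tendsto_nat_mul_hitProb_one_sub_div_sq_sub_one (s : ℝ) :
    Tendsto (fun n : ℕ => (n : ℝ) * (hitProb (1 - s / (n : ℝ) ^ 2) - 1)) atTop
      (𝓝 (-√(2 * s))) := by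
  have hsq := tendsto_div_natCast_sq s
  have hlin : Tendsto (fun n : ℕ => s / (n : ℝ)) atTop (𝓝 0) :=
    tendsto_const_nhds.div_atTop tendsto_natCast_atTop_atTop
  have hroot : Tendsto (fun n : ℕ => √(s * (2 - s / (n : ℝ) ^ 2))) atTop (𝓝 (√(2 * s))) := by
    have := ((tendsto_const_nhds (x := (2 : ℝ))).sub hsq).const_mul s
    rw [sub_zero, mul_comm] at this
    exact this.sqrt
  have hx : Tendsto (fun n : ℕ => 1 - s / (n : ℝ) ^ 2) atTop (𝓝 1) := by
    simpa using (tendsto_const_nhds (x := (1 : ℝ))).sub hsq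
  have := (hlin.sub hroot).div hx one_ne_zero
  rw [zero_sub, div_one] at this
  refine this.congr' ?_
  filter_upwards [eventually_ne_atTop 0, hx.eventually_ne one_ne_zero] with n hn hx0
  have hn' : (0 : ℝ) < n := by positivity
  have hsqrt : (n : ℝ) * √(1 - (1 - s / (n : ℝ) ^ 2) ^ 2) = √(s * (2 - s / (n : ℝ) ^ 2)) := by
    have h : s * (2 - s / (n : ℝ) ^ 2) = (n : ℝ) ^ 2 * (1 - (1 - s / (n : ℝ) ^ 2) ^ 2) := by
      field_simp
      ring
    rw [h, sqrt_mul (sq_nonneg _), sqrt_sq hn'.le]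
  rw [Pi.div_apply, hitProb, ← hsqrt, div_sub_one hx0, mul_div_assoc']
  congr 1
  field_simp
  ring

lemma tendsto_hitProb_one_sub_div_sq_pow (s : ℝ) :
    Tendsto (fun n : ℕ => hitProb (1 - s / (n : ℝ) ^ 2) ^ n) atTop (𝓝 (exp (-√(2 * s)))) := by
  simpa using tendsto_one_add_pow_exp_of_tendsto (tendsto_nat_mul_hitProb_one_sub_div_sq_sub_one s)

lemma lintegral_comp_one_sub_div {c : ℝ} (hc : 0 < c) (F : ℝ → ℝ≥0∞) :
    ∫⁻ s, F (1 - s / c) = ENNReal.ofReal c * ∫⁻ x, F x := by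
  have hderiv : ∀ s ∈ (univ : Set ℝ), HasDerivWithinAt (fun s => 1 - s / c) (-c⁻¹) univ s :=
    fun s _ => (((hasDerivAt_id s).div_const c).const_sub 1).hasDerivWithinAt.congr_deriv
      (by simp)
  have hinj : InjOn (fun s : ℝ => 1 - s / c) univ := fun a _ b _ h => by
    simpa [hc.ne'] using h
  have himage : (fun s : ℝ => 1 - s / c) '' univ = univ :=
    eq_univ_of_forall fun x => ⟨c * (1 - x), trivial, by field_simp; ring⟩
  have := lintegral_image_eq_lintegral_abs_deriv_mul MeasurableSet.univ hderiv hinj F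
  rw [himage, Measure.restrict_univ, lintegral_const_mul' _ _ ENNReal.ofReal_ne_top,
    abs_neg, abs_inv, abs_of_pos hc] at this
  rw [this, ← mul_assoc, ← ENNReal.ofReal_mul hc.le, mul_inv_cancel₀ hc.ne', ENNReal.ofReal_one,
    one_mul]

lemma AEMeasurable.comp_one_sub_div {F : ℝ → ℝ≥0∞} (hF : AEMeasurable F) (c : ℝ) :
    AEMeasurable (fun s => F (1 - s / c)) := by
  rcases eq_or_ne c 0 with rfl | hc
  · simp
  have hqmp : Measure.QuasiMeasurePreserving (fun s : ℝ => 1 - s / c) := by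
    have := (volume.measurePreserving_sub_left (1 : ℝ)).quasiMeasurePreserving.comp
      (Measure.quasiMeasurePreserving_smul volume (inv_ne_zero hc))
    simpa [Function.comp_def, div_eq_inv_mul] using this
  exact hF.comp_quasiMeasurePreserving hqmp

lemma lintegral_rpow_mul_exp_neg_sqrt_two_mul {β : ℝ} (hβ : 0 < β) :
    ∫⁻ s in Ioi 0, ENNReal.ofReal (s ^ (β - 1) * exp (-√(2 * s))) =
      ENNReal.ofReal (2 ^ (1 - β) * Gamma (2 * β)) := by
  have hsqrt : ∀ s ∈ Ioi (0 : ℝ), exp (-√(2 * s)) = exp (-√2 * s ^ (1 / 2 : ℝ)) := fun s hs => by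
    rw [sqrt_mul zero_le_two, sqrt_eq_rpow s, neg_mul]
  have hval : ∫ s in Ioi 0, s ^ (β - 1) * exp (-√(2 * s)) = 2 ^ (1 - β) * Gamma (2 * β) := by
    rw [setIntegral_congr_fun measurableSet_Ioi fun s hs => by rw [hsqrt s hs],
      integral_rpow_mul_exp_neg_mul_rpow (by norm_num) (by linarith) (by positivity)]
    have h2 : (√2 : ℝ) ^ (-(β - 1 + 1) / (1 / 2)) = 2 ^ (-β) := by
      rw [sqrt_eq_rpow, ← rpow_mul zero_le_two]
      congr 1
      ring
    rw [h2, show (β - 1 + 1) / (1 / 2) = 2 * β by ring, show (1 : ℝ) - β = -β + 1 by ring,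
      rpow_add_one two_ne_zero]
    ring
  have hpos : 0 < 2 ^ (1 - β) * Gamma (2 * β) :=
    mul_pos (by positivity) (Gamma_pos_of_pos (by linarith))
  rw [← hval, ofReal_integral_eq_lintegral_ofReal]
  · exact Integrable.of_integral_ne_zero (hval ▸ hpos.ne')
  · filter_upwards [ae_restrict_mem measurableSet_Ioi] with s hs
    have : (0 : ℝ) < s := hs
    positivity

lemma EReal.coe_le_liminf_of_ofReal_le_liminf {ι : Type*} {l : Filter ι} {u : ι → ℝ} {c : ℝ}
    (hc : 0 < c) (h : ENNReal.ofReal c ≤ liminf (fun i => ENNReal.ofReal (u i)) l) :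
    (c : EReal) ≤ liminf (fun i => (u i : EReal)) l := by
  rw [le_liminf_iff]
  intro y hy
  obtain ⟨r, hyr, hrc⟩ := EReal.lt_iff_exists_real_btwn.1 (max_lt hy (EReal.coe_pos.2 hc))
  have hr : ENNReal.ofReal r < ENNReal.ofReal c :=
    (ENNReal.ofReal_lt_ofReal_iff hc).2 (EReal.coe_lt_coe_iff.1 hrc)
  filter_upwards [eventually_lt_of_lt_liminf (hr.trans_le h)] with i hi
  have hri : r < u i := (ENNReal.ofReal_lt_ofReal_iff'.1 hi).1
  exact (le_max_left _ _).trans_lt (hyr.trans (EReal.coe_lt_coe_iff.2 hri))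

section

variable (β : ℝ) (L f : ℝ → ℝ)

noncomputable def tailIntegral (n : ℕ) : ℝ := ∫ x in Ioo 0 1, (n : ℝ) * hitProb x ^ n * f x

noncomputable def tailScale (n : ℕ) : ℝ := (n : ℝ) ^ (1 - 2 * β) * L ((n : ℝ) ^ 2)

noncomputable def substitutedIntegrand (n : ℕ) (s : ℝ) : ℝ≥0∞ :=
  (Ioo 0 1).indicator (fun x => ENNReal.ofReal ((n : ℝ) * hitProb x ^ n * f x))
      (1 - s / (n : ℝ) ^ 2) *
    ENNReal.ofReal (((n : ℝ) ^ 2 * tailScale β L n)⁻¹)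

lemma natCast_mul_mul_inv_sq_mul_tailScale {n : ℕ} (hn : n ≠ 0) {s : ℝ} (hs : 0 < s)
    (hL : L ((n : ℝ) ^ 2) ≠ 0) (hLs : L (s⁻¹ * (n : ℝ) ^ 2) ≠ 0) (y : ℝ) :
    (n : ℝ) * y * ((n : ℝ) ^ 2 * tailScale β L n)⁻¹ =
      y / ((1 - (1 - s / (n : ℝ) ^ 2)) ^ (β - 1) * L (1 / (1 - (1 - s / (n : ℝ) ^ 2)))) *
        s ^ (β - 1) * (L (s⁻¹ * (n : ℝ) ^ 2) / L ((n : ℝ) ^ 2)) := by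
  have hn' : (0 : ℝ) < n := by positivity
  have hN : (0 : ℝ) < (n : ℝ) ^ 2 := by positivity
  have hscale : (n : ℝ) ^ (1 - 2 * β) = n * (((n : ℝ) ^ 2) ^ β)⁻¹ := by
    rw [rpow_sub hn', rpow_one, rpow_mul hn'.le, rpow_two, div_eq_mul_inv]
  have hpow : (s / (n : ℝ) ^ 2) ^ (β - 1) = s ^ (β - 1) / (((n : ℝ) ^ 2) ^ β / (n : ℝ) ^ 2) := by
    rw [div_rpow hs.le hN.le, rpow_sub_one hN.ne']
  have hPβ : 0 < ((n : ℝ) ^ 2) ^ β := rpow_pos_of_pos hN β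
  have hsβ : 0 < s ^ (β - 1) := rpow_pos_of_pos hs _
  rw [← div_eq_inv_mul] at hLs ⊢
  rw [tailScale, hscale, sub_sub_cancel, hpow, one_div, inv_div]
  field_simp

variable {β L f}

lemma integrableOn_tailIntegrand (hf0 : ∀ x ∈ Ioo (0 : ℝ) 1, 0 ≤ f x)
    (hf : IntegrableOn f (Ioo 0 1)) (n : ℕ) :
    IntegrableOn (fun x => (n : ℝ) * hitProb x ^ n * f x) (Ioo 0 1) := by
  refine (hf.const_mul n).mono' ((measurable_hitProb.pow_const n).const_mul _
    |>.aestronglyMeasurable.mul hf.aestronglyMeasurable) ?_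
  filter_upwards [ae_restrict_mem measurableSet_Ioo] with x hx
  have hp := hitProb_nonneg hx
  rw [norm_of_nonneg (by have := hf0 x hx; positivity)]
  gcongr
  · exact hf0 x hx
  · exact mul_le_of_le_one_right n.cast_nonneg (pow_le_one₀ hp (hitProb_le_one hx))

lemma lintegral_substitutedIntegrand (hf0 : ∀ x ∈ Ioo (0 : ℝ) 1, 0 ≤ f x)
    (hf : IntegrableOn f (Ioo 0 1)) {n : ℕ} (hn : n ≠ 0) :
    ∫⁻ s, substitutedIntegrand β L f n s =
      ENNReal.ofReal (tailIntegral f n / tailScale β L n) := by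
  have hN : (0 : ℝ) < (n : ℝ) ^ 2 := by positivity
  have hnonneg : ∀ x ∈ Ioo (0 : ℝ) 1, 0 ≤ (n : ℝ) * hitProb x ^ n * f x := fun x hx => by
    have := hitProb_nonneg hx
    have := hf0 x hx
    positivity
  have hJ : ENNReal.ofReal (tailIntegral f n) =
      ∫⁻ x in Ioo 0 1, ENNReal.ofReal ((n : ℝ) * hitProb x ^ n * f x) :=
    ofReal_integral_eq_lintegral_ofReal (integrableOn_tailIntegrand hf0 hf n)
      (ae_restrict_of_forall_mem measurableSet_Ioo hnonneg)
  have hJ0 : 0 ≤ tailIntegral f n := setIntegral_nonneg measurableSet_Ioo hnonneg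
  simp only [substitutedIntegrand]
  rw [lintegral_mul_const' _ _ ENNReal.ofReal_ne_top, lintegral_comp_one_sub_div hN,
    lintegral_indicator measurableSet_Ioo, ← hJ, ← ENNReal.ofReal_mul hN.le,
    ← ENNReal.ofReal_mul (mul_nonneg hN.le hJ0)]
  congr 1
  field_simp

lemma aemeasurable_substitutedIntegrand (hf : IntegrableOn f (Ioo 0 1)) (n : ℕ) :
    AEMeasurable (substitutedIntegrand β L f n) := by
  have h : AEMeasurable ((Ioo 0 1).indicator
      fun x => ENNReal.ofReal ((n : ℝ) * hitProb x ^ n * f x)) :=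
    (aemeasurable_indicator_iff measurableSet_Ioo).2 <| ENNReal.measurable_ofReal.comp_aemeasurable
      (((measurable_hitProb.pow_const n).const_mul _).aemeasurable.mul hf.aemeasurable)
  exact (h.comp_one_sub_div _).mul_const _

lemma tendsto_substitutedIntegrand (hLpos : ∀ x : ℝ, 0 < x → 0 < L x)
    (hslow : ∀ l : ℝ, 0 < l → Tendsto (fun x : ℝ => L (l * x) / L x) atTop (𝓝 1))
    (hf0 : ∀ x ∈ Ioo (0 : ℝ) 1, 0 ≤ f x)
    (hedge : Tendsto (fun u : ℝ => f u / ((1 - u) ^ (β - 1) * L (1 / (1 - u))))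
      (𝓝[Ioo 0 1] 1) (𝓝 1)) {s : ℝ} (hs : 0 < s) :
    Tendsto (fun n => substitutedIntegrand β L f n s) atTop
      (𝓝 (ENNReal.ofReal (s ^ (β - 1) * exp (-√(2 * s))))) := by
  have hsq := tendsto_div_natCast_sq s
  have hx : Tendsto (fun n : ℕ => 1 - s / (n : ℝ) ^ 2) atTop (𝓝[Ioo 0 1] 1) := by
    refine tendsto_nhdsWithin_iff.2 ⟨by simpa using tendsto_const_nhds.sub hsq, ?_⟩
    filter_upwards [eventually_ne_atTop 0, hsq.eventually (gt_mem_nhds one_pos)] with n hn h1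
    exact ⟨sub_pos.2 h1, sub_lt_self 1 (by positivity)⟩
  have hratio : Tendsto (fun n : ℕ => L (s⁻¹ * (n : ℝ) ^ 2) / L ((n : ℝ) ^ 2)) atTop (𝓝 1) :=
    (hslow s⁻¹ (inv_pos.2 hs)).comp
      ((tendsto_pow_atTop two_ne_zero).comp tendsto_natCast_atTop_atTop)
  have hlim := (((tendsto_hitProb_one_sub_div_sq_pow s).mul (hedge.comp hx)).mul_const
    (s ^ (β - 1))).mul hratio
  rw [mul_one, mul_one, mul_comm (exp _)] at hlim
  refine (ENNReal.tendsto_ofReal hlim).congr' ?_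
  filter_upwards [eventually_ne_atTop 0, eventually_mem_of_tendsto_nhdsWithin hx] with n hn hxn
  have hLs := hLpos (s⁻¹ * (n : ℝ) ^ 2) (by positivity)
  have hL := hLpos ((n : ℝ) ^ 2) (by positivity)
  have := hitProb_nonneg hxn
  have := hf0 _ hxn
  have key := natCast_mul_mul_inv_sq_mul_tailScale β L hn hs hL.ne' hLs.ne' (f (1 - s / n ^ 2))
  rw [substitutedIntegrand, indicator_of_mem hxn, ← ENNReal.ofReal_mul (by positivity)]
  congr 1
  simp only [Function.comp_apply]
  linear_combination -(hitProb (1 - s / (n : ℝ) ^ 2) ^ n) * key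

end

/-- If `β > 0`, `L` is slowly varying, and `f` is a probability density on `(0,1)` with
`f(u)/((1−u)^(β−1)·L(1/(1−u))) → 1` as `u ↑ 1`, then with
`J_n := ∫₀¹ n·((1 − √(1−x²))/x)^n f(x) dx` one has
`liminf J_n / (n^(1−2β)·L(n²)) ≥ 2^(1−β)·Γ(2β)`. -/
theorem stmt_17 (β : ℝ) (hβ : 0 < β) (L : ℝ → ℝ) (hLpos : ∀ x : ℝ, 0 < x → 0 < L x)
    (hslow : ∀ l : ℝ, 0 < l →
      Filter.Tendsto (fun x : ℝ => L (l * x) / L x) Filter.atTop (nhds 1))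
    (f : ℝ → ℝ) (hf0 : ∀ u ∈ Set.Ioo (0 : ℝ) 1, 0 ≤ f u)
    (hfint : ∫ u in Set.Ioo (0 : ℝ) 1, f u = 1)
    (hedge : Filter.Tendsto
      (fun u : ℝ => f u / ((1 - u) ^ (β - 1) * L (1 / (1 - u))))
      (nhdsWithin 1 (Set.Ioo 0 1)) (nhds 1)) :
    (((2 : ℝ) ^ (1 - β) * Real.Gamma (2 * β) : ℝ) : EReal) ≤
      Filter.liminf
        (fun n : ℕ =>
          (((∫ x in Set.Ioo (0 : ℝ) 1,
              (n : ℝ) * ((1 - Real.sqrt (1 - x ^ 2)) / x) ^ n * f x) /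
            ((n : ℝ) ^ ((1 : ℝ) - 2 * β) * L ((n : ℝ) ^ 2)) : ℝ) : EReal))
        Filter.atTop := by
  have hf : IntegrableOn f (Ioo 0 1) := Integrable.of_integral_ne_zero (by simp [hfint])
  have hC : 0 < (2 : ℝ) ^ (1 - β) * Gamma (2 * β) :=
    mul_pos (by positivity) (Gamma_pos_of_pos (by linarith))
  refine EReal.coe_le_liminf_of_ofReal_le_liminf hC ?_
  calc ENNReal.ofReal (2 ^ (1 - β) * Gamma (2 * β))
      = ∫⁻ s in Ioi 0, ENNReal.ofReal (s ^ (β - 1) * exp (-√(2 * s))) :=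
        (lintegral_rpow_mul_exp_neg_sqrt_two_mul hβ).symm
    _ = ∫⁻ s in Ioi 0, liminf (fun n => substitutedIntegrand β L f n s) atTop :=
        setLIntegral_congr_fun measurableSet_Ioi fun s hs =>
          (tendsto_substitutedIntegrand hLpos hslow hf0 hedge hs).liminf_eq.symm
    _ ≤ ∫⁻ s, liminf (fun n => substitutedIntegrand β L f n s) atTop :=
        setLIntegral_le_lintegral _ _
    _ ≤ liminf (fun n => ∫⁻ s, substitutedIntegrand β L f n s) atTop :=
        lintegral_liminf_le' fun n => aemeasurable_substitutedIntegrand hf n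
    _ = liminf (fun n => ENNReal.ofReal (tailIntegral f n / tailScale β L n)) atTop :=
        liminf_congr <| (eventually_ne_atTop 0).mono fun n hn =>
          lintegral_substitutedIntegrand hf0 hf hn
end

section
/- Let α, β, λ₁, λ₂ > 0, and let X and Y be independent random variables with X ~ Gamma(α, λ₁) and Y ~ Gamma(β, λ₂) (shape–rate parametrization, i.e., X has density (λ₁^α/Γ(α)) x^{α−1} e^{−λ₁ x} on (0,∞) and Y has density (λ₂^β/Γ(β)) y^{β−1} e^{−λ₂ y} on (0,∞)). Then π := X/(X+Y) takes values in (0,1) and has probability density function f_π(u) = (Γ(α+β)/(Γ(α)Γ(β))) · λ₁^α λ₂^β · u^{α−1} (1−u)^{β−1} / (λ₂ + (λ₁−λ₂)u)^{α+β} for 0 < u < 1. -/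
open MeasureTheory Set
open scoped ENNReal

/-!
If `X` and `Y` are independent with densities `f`, `g` vanishing on `(-∞, 0]`, the substitution
`(x, y) = (u s, (1 - u) s)`, of Jacobian `s`, shows that `X / (X + Y)` has density
`u ↦ ∫₀^∞ s f(u s) g((1 - u) s) ds` on `(0, 1)`. It is carried out as two one-dimensional
substitutions: `y = x / u - x` for fixed `x`, then, after Tonelli, `x = u s` for fixed `u`.
For Gamma densities the integrand is a constant times `s ^ (α + β - 1) * exp (-(L s))` with
`L = λ₂ + (λ₁ - λ₂) u`, whose integral is `Γ(α + β) / L ^ (α + β)`.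
-/

lemma lintegral_Ioi_eq_lintegral_Ioo_div_sub {x : ℝ} (hx : 0 < x) (h : ℝ → ℝ≥0∞) :
    ∫⁻ y in Ioi 0, h y = ∫⁻ u in Ioo 0 1, ENNReal.ofReal (x / u ^ 2) * h (x / u - x) := by
  have himage : (fun u => x / u - x) '' Ioo 0 1 = Ioi 0 := by
    ext y
    simp only [mem_image, mem_Ioo, mem_Ioi]
    constructor
    · rintro ⟨u, ⟨hu0, hu1⟩, rfl⟩
      rw [sub_pos, lt_div_iff₀ hu0]
      nlinarith
    · intro hy
      refine ⟨x / (x + y), ⟨by positivity, (div_lt_one (by positivity)).mpr (by linarith)⟩, ?_⟩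
      field_simp
      ring
  have hderiv : ∀ u ∈ Ioo (0 : ℝ) 1,
      HasDerivWithinAt (fun u => x / u - x) (-(x / u ^ 2)) (Ioo 0 1) u := by
    intro u hu
    simpa [div_eq_mul_inv] using
      (((hasDerivAt_inv hu.1.ne').const_mul x).sub_const x).hasDerivWithinAt
  have hinj : InjOn (fun u => x / u - x) (Ioo 0 1) := by
    intro u hu v hv huv
    have : x / u = x / v := by simpa using huv
    rwa [div_eq_div_iff hu.1.ne' hv.1.ne', mul_right_inj' hx.ne', eq_comm] at this
  rw [← himage, lintegral_image_eq_lintegral_abs_deriv_mul measurableSet_Ioo hderiv hinj]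
  refine setLIntegral_congr_fun measurableSet_Ioo fun u hu => ?_
  rw [abs_neg, abs_of_nonneg (by positivity)]

lemma lintegral_Ioi_eq_lintegral_Ioi_const_mul {c : ℝ} (hc : 0 < c) (h : ℝ → ℝ≥0∞) :
    ∫⁻ x in Ioi 0, h x = ∫⁻ s in Ioi 0, ENNReal.ofReal c * h (c * s) := by
  have hderiv : ∀ s ∈ Ioi (0 : ℝ), HasDerivWithinAt (c * ·) c (Ioi 0) s :=
    fun s _ => by simpa using ((hasDerivAt_id s).const_mul c).hasDerivWithinAt
  conv_lhs => rw [← image_const_mul_Ioi_zero hc]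
  rw [lintegral_image_eq_lintegral_abs_deriv_mul measurableSet_Ioi hderiv
    (mul_right_injective₀ hc.ne').injOn, abs_of_pos hc]

lemma lintegral_eq_setLIntegral_Ioi_of_nonpos {F : ℝ → ℝ≥0∞} (hF : ∀ x ≤ 0, F x = 0) :
    ∫⁻ x, F x = ∫⁻ x in Ioi 0, F x := by
  refine (setLIntegral_eq_of_support_subset fun x hx => ?_).symm
  by_contra hx'
  exact hx (hF x (not_lt.mp hx'))

noncomputable def divAddDensity (f g : ℝ → ℝ≥0∞) (u : ℝ) : ℝ≥0∞ :=
  ∫⁻ s in Ioi 0, ENNReal.ofReal s * f (u * s) * g ((1 - u) * s)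

lemma lintegral_comp_div_add_prod_withDensity {f g φ : ℝ → ℝ≥0∞} (hf : Measurable f)
    (hg : Measurable g) (hφ : Measurable φ) (hf0 : ∀ x ≤ 0, f x = 0) (hg0 : ∀ y ≤ 0, g y = 0) :
    ∫⁻ p, φ (p.1 / (p.1 + p.2)) ∂((volume.withDensity f).prod (volume.withDensity g))
      = ∫⁻ u in Ioo 0 1, divAddDensity f g u * φ u := by
  rw [prod_withDensity hf hg, lintegral_withDensity_eq_lintegral_mul _ (by fun_prop) (by fun_prop),
    lintegral_prod _ (by fun_prop)]
  simp only [Pi.mul_apply]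
  calc _ = ∫⁻ x in Ioi 0, ∫⁻ u in Ioo 0 1,
        ENNReal.ofReal (x / u ^ 2) * (f x * g (x / u - x) * φ u) := by
        rw [lintegral_eq_setLIntegral_Ioi_of_nonpos fun x hx => by simp [hf0 x hx]]
        refine setLIntegral_congr_fun measurableSet_Ioi fun x hx => ?_
        rw [lintegral_eq_setLIntegral_Ioi_of_nonpos fun y hy => by simp [hg0 y hy],
          lintegral_Ioi_eq_lintegral_Ioo_div_sub hx]
        refine setLIntegral_congr_fun measurableSet_Ioo fun u hu => ?_
        have hx' : x ≠ 0 := hx.ne'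
        have hu' : u ≠ 0 := hu.1.ne'
        rw [show x / (x + (x / u - x)) = u by field_simp; ring]
    _ = ∫⁻ u in Ioo 0 1, ∫⁻ x in Ioi 0,
        ENNReal.ofReal (x / u ^ 2) * (f x * g (x / u - x) * φ u) :=
      lintegral_lintegral_swap (by fun_prop)
    _ = _ := by
      refine setLIntegral_congr_fun measurableSet_Ioo fun u hu => ?_
      rw [lintegral_Ioi_eq_lintegral_Ioi_const_mul hu.1, divAddDensity,
        ← lintegral_mul_const _ (by fun_prop)]
      refine setLIntegral_congr_fun measurableSet_Ioi fun s hs => ?_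
      have hu' : u ≠ 0 := hu.1.ne'
      have hs' : s ≠ 0 := hs.ne'
      rw [show u * s / u - u * s = (1 - u) * s by field_simp, ← mul_assoc,
        ← ENNReal.ofReal_mul hu.1.le, show u * (u * s / u ^ 2) = s by field_simp]
      ring

lemma measurable_divAddDensity {f g : ℝ → ℝ≥0∞} (hf : Measurable f) (hg : Measurable g) :
    Measurable (divAddDensity f g) :=
  Measurable.lintegral_prod_right' (f := fun p : ℝ × ℝ =>
    ENNReal.ofReal p.2 * f (p.1 * p.2) * g ((1 - p.1) * p.2)) (by fun_prop)

lemma map_div_add_prod_withDensity {f g : ℝ → ℝ≥0∞} (hf : Measurable f) (hg : Measurable g)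
    (hf0 : ∀ x ≤ 0, f x = 0) (hg0 : ∀ y ≤ 0, g y = 0) :
    ((volume.withDensity f).prod (volume.withDensity g)).map (fun p => p.1 / (p.1 + p.2))
      = volume.withDensity ((Ioo 0 1).indicator (divAddDensity f g)) := by
  refine Measure.ext_of_lintegral _ fun φ hφ => ?_
  have hρ := (measurable_divAddDensity hf hg).indicator (measurableSet_Ioo (a := 0) (b := 1))
  rw [lintegral_map hφ (by fun_prop), lintegral_withDensity_eq_lintegral_mul _ hρ hφ,
    lintegral_comp_div_add_prod_withDensity hf hg hφ hf0 hg0,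
    ← lintegral_indicator measurableSet_Ioo]
  simp only [Pi.mul_apply, indicator_mul_left]

lemma map_div_add_of_indepFun {Ω : Type*} [MeasurableSpace Ω] {μ : Measure Ω} {X Y : Ω → ℝ}
    {f g : ℝ → ℝ≥0∞} (hX : Measurable X) (hY : Measurable Y)
    (hXY : ProbabilityTheory.IndepFun X Y μ)
    (hf : Measurable f) (hg : Measurable g) (hf_top : ∀ x, f x ≠ ∞) (hg_top : ∀ y, g y ≠ ∞)
    (hf0 : ∀ x ≤ 0, f x = 0) (hg0 : ∀ y ≤ 0, g y = 0)
    (hXf : μ.map X = volume.withDensity f) (hYg : μ.map Y = volume.withDensity g) :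
    μ.map (fun ω => X ω / (X ω + Y ω))
      = volume.withDensity ((Ioo 0 1).indicator (divAddDensity f g)) := by
  have hσX : SigmaFinite (μ.map X) := hXf ▸ SigmaFinite.withDensity_of_ne_top' hf_top
  have hσY : SigmaFinite (μ.map Y) := hYg ▸ SigmaFinite.withDensity_of_ne_top' hg_top
  have hjoint := (ProbabilityTheory.indepFun_iff_map_prod_eq_prod_map_map' hX.aemeasurable
    hY.aemeasurable hσX hσY).mp hXY
  have hcomp : μ.map (fun ω => X ω / (X ω + Y ω))
      = (μ.map fun ω => (X ω, Y ω)).map fun p => p.1 / (p.1 + p.2) := by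
    rw [Measure.map_map (by fun_prop) (hX.prodMk hY)]
    rfl
  rw [hcomp, hjoint, hXf, hYg, map_div_add_prod_withDensity hf hg hf0 hg0]

lemma ae_pos_of_map_eq_withDensity {Ω : Type*} [MeasurableSpace Ω] {μ : Measure Ω} {X : Ω → ℝ}
    {f : ℝ → ℝ≥0∞} (hX : AEMeasurable X μ) (hf : Measurable f)
    (hXf : μ.map X = volume.withDensity f) (hf0 : ∀ x ≤ 0, f x = 0) :
    ∀ᵐ ω ∂μ, 0 < X ω := by
  refine ae_of_ae_map hX ?_
  rw [hXf, ae_withDensity_iff hf]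
  exact ae_of_all _ fun x hx => not_le.mp fun h => hx (hf0 x h)

lemma lintegral_Ioi_rpow_mul_exp_neg_mul {a r : ℝ} (ha : 0 < a) (hr : 0 < r) :
    ∫⁻ t in Ioi 0, ENNReal.ofReal (t ^ (a - 1) * Real.exp (-(r * t)))
      = ENNReal.ofReal ((1 / r) ^ a * Real.Gamma a) := by
  have h := Real.integral_rpow_mul_exp_neg_mul_Ioi ha hr
  rw [← h, ofReal_integral_eq_lintegral_ofReal]
  · exact Integrable.of_integral_ne_zero (by rw [h]; positivity)
  · filter_upwards [ae_restrict_mem measurableSet_Ioi] with t ht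
    exact mul_nonneg (Real.rpow_nonneg (le_of_lt ht) _) (Real.exp_nonneg _)

/-- `ProbabilityTheory.gammaPDFReal` with `0 < x` in place of `0 ≤ x`, as in the hypotheses. -/
noncomputable def gammaDensity (a l x : ℝ) : ℝ :=
  if 0 < x then l ^ a / Real.Gamma a * x ^ (a - 1) * Real.exp (-(l * x)) else 0

lemma measurable_gammaDensity (a l : ℝ) : Measurable (gammaDensity a l) :=
  Measurable.ite measurableSet_Ioi (by fun_prop) measurable_const

lemma gammaDensity_of_nonpos {a l x : ℝ} (hx : x ≤ 0) : gammaDensity a l x = 0 :=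
  if_neg hx.not_gt

lemma gammaDensity_nonneg {a l : ℝ} (ha : 0 < a) (hl : 0 < l) (x : ℝ) :
    0 ≤ gammaDensity a l x := by
  unfold gammaDensity
  split_ifs with hx
  · have := Real.Gamma_pos_of_pos ha
    positivity
  · exact le_rfl

lemma mul_gammaDensity_mul_gammaDensity {α β l₁ l₂ u s : ℝ} (hu : u ∈ Ioo 0 1) (hs : 0 < s) :
    s * gammaDensity α l₁ (u * s) * gammaDensity β l₂ ((1 - u) * s)
      = l₁ ^ α / Real.Gamma α * (l₂ ^ β / Real.Gamma β) * u ^ (α - 1) * (1 - u) ^ (β - 1)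
        * (s ^ (α + β - 1) * Real.exp (-((l₂ + (l₁ - l₂) * u) * s))) := by
  obtain ⟨hu0, hu1⟩ := hu
  have hu1' : 0 < 1 - u := by linarith
  rw [gammaDensity, gammaDensity, if_pos (by positivity), if_pos (by positivity),
    Real.mul_rpow hu0.le hs.le, Real.mul_rpow hu1'.le hs.le,
    show α + β - 1 = (α - 1) + (β - 1) + 1 by ring, Real.rpow_add_one hs.ne',
    Real.rpow_add hs,
    show -((l₂ + (l₁ - l₂) * u) * s) = -(l₁ * (u * s)) + -(l₂ * ((1 - u) * s)) by ring,
    Real.exp_add]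
  ring

lemma divAddDensity_gammaDensity {α β l₁ l₂ u : ℝ} (hα : 0 < α) (hβ : 0 < β) (hl₁ : 0 < l₁)
    (hl₂ : 0 < l₂) (hu : u ∈ Ioo 0 1) :
    divAddDensity (fun x => ENNReal.ofReal (gammaDensity α l₁ x))
        (fun y => ENNReal.ofReal (gammaDensity β l₂ y)) u
      = ENNReal.ofReal (Real.Gamma (α + β) / (Real.Gamma α * Real.Gamma β) *
          (l₁ ^ α * l₂ ^ β) * u ^ (α - 1) * (1 - u) ^ (β - 1)
            / (l₂ + (l₁ - l₂) * u) ^ (α + β)) := by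
  obtain ⟨hu0, hu1⟩ := hu
  have hL : 0 < l₂ + (l₁ - l₂) * u := by nlinarith
  have hΓα := Real.Gamma_pos_of_pos hα
  have hΓβ := Real.Gamma_pos_of_pos hβ
  have hC : 0 ≤ l₁ ^ α / Real.Gamma α * (l₂ ^ β / Real.Gamma β) * u ^ (α - 1)
      * (1 - u) ^ (β - 1) := by
    have : 0 < 1 - u := by linarith
    positivity
  have hintegrand : ∀ s ∈ Ioi (0 : ℝ),
      ENNReal.ofReal s * ENNReal.ofReal (gammaDensity α l₁ (u * s))
          * ENNReal.ofReal (gammaDensity β l₂ ((1 - u) * s))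
        = ENNReal.ofReal (l₁ ^ α / Real.Gamma α * (l₂ ^ β / Real.Gamma β) * u ^ (α - 1)
              * (1 - u) ^ (β - 1))
          * ENNReal.ofReal (s ^ (α + β - 1) * Real.exp (-((l₂ + (l₁ - l₂) * u) * s))) := by
    intro s hs
    rw [← ENNReal.ofReal_mul hs.le,
      ← ENNReal.ofReal_mul (mul_nonneg hs.le (gammaDensity_nonneg hα hl₁ _)),
      mul_gammaDensity_mul_gammaDensity ⟨hu0, hu1⟩ hs, ENNReal.ofReal_mul hC]
  rw [divAddDensity, setLIntegral_congr_fun measurableSet_Ioi hintegrand,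
    lintegral_const_mul' _ _ ENNReal.ofReal_ne_top,
    lintegral_Ioi_rpow_mul_exp_neg_mul (by positivity) hL, ← ENNReal.ofReal_mul hC,
    Real.div_rpow zero_le_one hL.le, Real.one_rpow]
  congr 1
  field_simp

theorem stmt_19_general {Ω : Type*} [MeasureSpace Ω]
    (α β l₁ l₂ : ℝ) (hα : 0 < α) (hβ : 0 < β) (hl₁ : 0 < l₁) (hl₂ : 0 < l₂)
    (X Y : Ω → ℝ) (hX : Measurable X) (hY : Measurable Y)
    (hindep : ProbabilityTheory.IndepFun X Y)
    (hXdens : Measure.map X volume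
      = volume.withDensity (fun x => ENNReal.ofReal
          (if 0 < x then l₁ ^ α / Real.Gamma α * x ^ (α - 1) * Real.exp (-(l₁ * x)) else 0)))
    (hYdens : Measure.map Y volume
      = volume.withDensity (fun y => ENNReal.ofReal
          (if 0 < y then l₂ ^ β / Real.Gamma β * y ^ (β - 1) * Real.exp (-(l₂ * y)) else 0))) :
    (∀ᵐ ω, X ω / (X ω + Y ω) ∈ Set.Ioo (0 : ℝ) 1) ∧
    Measure.map (fun ω => X ω / (X ω + Y ω)) volume
      = volume.withDensity (fun u => ENNReal.ofReal
          (if u ∈ Set.Ioo (0 : ℝ) 1 then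
            Real.Gamma (α + β) / (Real.Gamma α * Real.Gamma β) *
              (l₁ ^ α * l₂ ^ β) * u ^ (α - 1) * (1 - u) ^ (β - 1) /
                (l₂ + (l₁ - l₂) * u) ^ (α + β)
          else 0)) := by
  have hXlaw : volume.map X = volume.withDensity fun x => .ofReal (gammaDensity α l₁ x) := hXdens
  have hYlaw : volume.map Y = volume.withDensity fun y => .ofReal (gammaDensity β l₂ y) := hYdens
  have hmeas : ∀ a l, Measurable fun x => ENNReal.ofReal (gammaDensity a l x) :=
    fun a l => (measurable_gammaDensity a l).ennreal_ofReal
  have hvanish : ∀ a l, ∀ x ≤ 0, ENNReal.ofReal (gammaDensity a l x) = 0 :=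
    fun a l x hx => by rw [gammaDensity_of_nonpos hx, ENNReal.ofReal_zero]
  have hXpos := ae_pos_of_map_eq_withDensity hX.aemeasurable (hmeas _ _) hXlaw (hvanish _ _)
  have hYpos := ae_pos_of_map_eq_withDensity hY.aemeasurable (hmeas _ _) hYlaw (hvanish _ _)
  refine ⟨?_, ?_⟩
  · filter_upwards [hXpos, hYpos] with ω hx hy
    exact ⟨by positivity, (div_lt_one (by positivity)).mpr (by linarith)⟩
  rw [map_div_add_of_indepFun hX hY hindep (hmeas _ _) (hmeas _ _)
    (fun _ => ENNReal.ofReal_ne_top) (fun _ => ENNReal.ofReal_ne_top) (hvanish _ _) (hvanish _ _)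
    hXlaw hYlaw]
  congr 1
  funext u
  split_ifs with hu
  · exact (indicator_of_mem hu _).trans (divAddDensity_gammaDensity hα hβ hl₁ hl₂ hu)
  · rw [indicator_of_notMem hu, ENNReal.ofReal_zero]

/-- If `X ~ Gamma(α, λ₁)` and `Y ~ Gamma(β, λ₂)` are independent (shape–rate parametrization),
then `π := X/(X+Y)` takes values in `(0,1)` and has density
`u ↦ (Γ(α+β)/(Γ(α)Γ(β))) · λ₁^α λ₂^β · u^(α−1)(1−u)^(β−1) / (λ₂ + (λ₁−λ₂)u)^(α+β)`
on `(0,1)`. -/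
theorem stmt_19 {Ω : Type*} [MeasureSpace Ω]
    (hprob : IsProbabilityMeasure (volume : Measure Ω))
    (α β l₁ l₂ : ℝ) (hα : 0 < α) (hβ : 0 < β) (hl₁ : 0 < l₁) (hl₂ : 0 < l₂)
    (X Y : Ω → ℝ) (hX : Measurable X) (hY : Measurable Y)
    (hindep : ProbabilityTheory.IndepFun X Y)
    (hXdens : Measure.map X volume
      = volume.withDensity (fun x => ENNReal.ofReal
          (if 0 < x then l₁ ^ α / Real.Gamma α * x ^ (α - 1) * Real.exp (-(l₁ * x)) else 0)))
    (hYdens : Measure.map Y volume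
      = volume.withDensity (fun y => ENNReal.ofReal
          (if 0 < y then l₂ ^ β / Real.Gamma β * y ^ (β - 1) * Real.exp (-(l₂ * y)) else 0))) :
    (∀ᵐ ω, X ω / (X ω + Y ω) ∈ Set.Ioo (0 : ℝ) 1) ∧
    Measure.map (fun ω => X ω / (X ω + Y ω)) volume
      = volume.withDensity (fun u => ENNReal.ofReal
          (if u ∈ Set.Ioo (0 : ℝ) 1 then
            Real.Gamma (α + β) / (Real.Gamma α * Real.Gamma β) *
              (l₁ ^ α * l₂ ^ β) * u ^ (α - 1) * (1 - u) ^ (β - 1) /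
                (l₂ + (l₁ - l₂) * u) ^ (α + β)
          else 0)) :=
  stmt_19_general α β l₁ l₂ hα hβ hl₁ hl₂ X Y hX hY hindep hXdens hYdens
end
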